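/- arXiv:1401.2200 — 6 statements merged into one kernel-verified Lean document; each statement's English description precedes it below -/
import Mathlib

section
/- Let X ⊆ ℝⁿ and let g : ℝⁿ × Δ → ℝ be convex in its first argument for every fixed δ, where (Δ, F, P) is a probability space. Define the probability of violation of a point x as V(x) = P({δ : g(x,δ) > 0}) (assume measurability of each such set). If every point of X has probability of violation at most ε, then every point of the convex hull of X has probability of violation at most (n+1)ε. -/
/-!
By Carathéodory, a point `x` of the convex hull of `X ⊆ ℝⁿ` is a convex combination of at most
`n + 1` points `y` of `X`. For each `δ`, convexity of `g · δ` gives `g x δ ≤ g y δ` for one of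
them, so the event `{g x · > 0}` is covered by the `n + 1` events `{g y · > 0}`, and the union
bound gives the factor `n + 1`.
-/

open MeasureTheory

open scoped ENNReal

theorem exists_finset_subset_card_le_finrank_add_one_of_mem_convexHull
    {𝕜 E : Type*} [Field 𝕜] [LinearOrder 𝕜] [IsStrictOrderedRing 𝕜]
    [AddCommGroup E] [Module 𝕜 E] [FiniteDimensional 𝕜 E] {X : Set E} {x : E}
    (hx : x ∈ convexHull 𝕜 X) :
    ∃ t : Finset E, ↑t ⊆ X ∧ t.card ≤ Module.finrank 𝕜 E + 1 ∧ x ∈ convexHull 𝕜 (t : Set E) := by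
  rw [convexHull_eq_union] at hx
  simp only [Set.mem_iUnion] at hx
  obtain ⟨t, htX, ht_indep, hxt⟩ := hx
  refine ⟨t, htX, ?_, hxt⟩
  calc t.card = Fintype.card t := (Fintype.card_coe t).symm
    _ ≤ Module.finrank 𝕜 (vectorSpan 𝕜 (Set.range ((↑) : t → E))) + 1 :=
      ht_indep.card_le_finrank_succ
    _ ≤ Module.finrank 𝕜 E + 1 := by gcongr; exact Submodule.finrank_le _

theorem setOf_pos_subset_biUnion_of_mem_convexHull
    {𝕜 E Δ : Type*} [Field 𝕜] [LinearOrder 𝕜] [IsStrictOrderedRing 𝕜]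
    [AddCommGroup E] [Module 𝕜 E] {g : E → Δ → 𝕜}
    (hconv : ∀ δ, ConvexOn 𝕜 Set.univ (fun x => g x δ)) {t : Set E} {x : E}
    (hx : x ∈ convexHull 𝕜 t) :
    {δ | 0 < g x δ} ⊆ ⋃ y ∈ t, {δ | 0 < g y δ} := by
  intro δ hδ
  obtain ⟨y, hyt, hxy⟩ := (hconv δ).exists_ge_of_mem_convexHull (Set.subset_univ t) hx
  exact Set.mem_biUnion hyt (lt_of_lt_of_le hδ hxy)

theorem measure_setOf_pos_le_finrank_add_one_mul_of_mem_convexHull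
    {E Δ : Type*} [AddCommGroup E] [Module ℝ E] [FiniteDimensional ℝ E]
    [MeasurableSpace Δ] (μ : Measure Δ) {g : E → Δ → ℝ}
    (hconv : ∀ δ, ConvexOn ℝ Set.univ (fun x => g x δ)) {X : Set E} {ε : ℝ≥0∞}
    (hX : ∀ y ∈ X, μ {δ | 0 < g y δ} ≤ ε) {x : E} (hx : x ∈ convexHull ℝ X) :
    μ {δ | 0 < g x δ} ≤ (Module.finrank ℝ E + 1) * ε := by
  obtain ⟨t, htX, ht_card, hxt⟩ := exists_finset_subset_card_le_finrank_add_one_of_mem_convexHull hx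
  calc μ {δ | 0 < g x δ}
      ≤ μ (⋃ y ∈ t, {δ | 0 < g y δ}) :=
        measure_mono (setOf_pos_subset_biUnion_of_mem_convexHull hconv hxt)
    _ ≤ ∑ y ∈ t, μ {δ | 0 < g y δ} := measure_biUnion_finset_le t _
    _ ≤ ∑ _y ∈ t, ε := Finset.sum_le_sum fun y hy => hX y (htX hy)
    _ = t.card * ε := by rw [Finset.sum_const, nsmul_eq_mul]
    _ ≤ (Module.finrank ℝ E + 1) * ε := by gcongr; exact_mod_cast ht_card

theorem stmt0_general {n : ℕ} {Δ : Type*} [MeasurableSpace Δ] (μ : Measure Δ)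
    [IsProbabilityMeasure μ]
    (g : EuclideanSpace ℝ (Fin n) → Δ → ℝ)
    (hconv : ∀ δ, ConvexOn ℝ Set.univ (fun x => g x δ))
    (X : Set (EuclideanSpace ℝ (Fin n))) (ε : ℝ)
    (hX : ∀ x ∈ X, (μ {δ | 0 < g x δ}).toReal ≤ ε) :
    ∀ x ∈ convexHull ℝ X, (μ {δ | 0 < g x δ}).toReal ≤ (n + 1) * ε := by
  intro x hx
  obtain ⟨y, hyX⟩ := convexHull_nonempty_iff.mp ⟨x, hx⟩
  have hε : 0 ≤ ε := ENNReal.toReal_nonneg.trans (hX y hyX)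
  have hX' : ∀ y ∈ X, μ {δ | 0 < g y δ} ≤ ENNReal.ofReal ε := fun y hy =>
    (ENNReal.le_ofReal_iff_toReal_le (measure_ne_top μ _) hε).mpr (hX y hy)
  have hbound := measure_setOf_pos_le_finrank_add_one_mul_of_mem_convexHull μ hconv hX' hx
  rw [finrank_euclideanSpace_fin] at hbound
  refine ENNReal.toReal_le_of_le_ofReal (by positivity) (hbound.trans_eq ?_)
  rw [ENNReal.ofReal_mul (by positivity)]
  norm_cast

theorem stmt0 {n : ℕ} {Δ : Type*} [MeasurableSpace Δ] (μ : Measure Δ)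
    [IsProbabilityMeasure μ]
    (g : EuclideanSpace ℝ (Fin n) → Δ → ℝ)
    (hconv : ∀ δ, ConvexOn ℝ Set.univ (fun x => g x δ))
    (hmeas : ∀ x, MeasurableSet {δ | 0 < g x δ})
    (X : Set (EuclideanSpace ℝ (Fin n))) (ε : ℝ) (hε : ε ∈ Set.Ioo (0:ℝ) 1)
    (hX : ∀ x ∈ X, (μ {δ | 0 < g x δ}).toReal ≤ ε) :
    ∀ x ∈ convexHull ℝ X, (μ {δ | 0 < g x δ}).toReal ≤ (n + 1) * ε :=
  stmt0_general μ g hconv X ε hX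
end

section
/- If points x_1,…,x_M ∈ ℝⁿ each satisfy P({δ : g(x_k,δ) > 0}) ≤ ε/min{n+1, M}, where g(·,δ) is convex for each δ, then every point of conv({x_1,…,x_M}) satisfies P({δ : g(x,δ) > 0}) ≤ ε. -/
/-!
If `g(·, δ)` is convex, the set `{x | g x δ ≤ 0}` is convex, so a point `y` of the convex hull of
points `z` with `g z δ ≤ 0` satisfies `g y δ ≤ 0`. Hence the violation set at `y` is covered by the
violation sets at the points of any finite set whose convex hull contains `y`, and by Carathéodory
such a set can be taken inside `{x_1, …, x_M}` with at most `min (n + 1) M` elements. A union bound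
finishes the proof.
-/

open MeasureTheory Finset

section Caratheodory

variable {𝕜 E : Type*} [Field 𝕜] [LinearOrder 𝕜] [IsStrictOrderedRing 𝕜]
  [AddCommGroup E] [Module 𝕜 E] [FiniteDimensional 𝕜 E]

theorem exists_finset_card_le_finrank_succ_of_mem_convexHull {s : Set E} {y : E}
    (hy : y ∈ convexHull 𝕜 s) :
    ∃ t : Finset E, ↑t ⊆ s ∧ #t ≤ Module.finrank 𝕜 E + 1 ∧ y ∈ convexHull 𝕜 (t : Set E) := by
  rw [convexHull_eq_union] at hy
  simp only [Set.mem_iUnion] at hy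
  obtain ⟨t, hts, hindep, hyt⟩ := hy
  refine ⟨t, hts, ?_, hyt⟩
  calc #t = Fintype.card t := (Fintype.card_coe t).symm
    _ ≤ Module.finrank 𝕜 (vectorSpan 𝕜 (Set.range ((↑) : t → E))) + 1 :=
      hindep.card_le_finrank_succ
    _ ≤ Module.finrank 𝕜 E + 1 := Nat.add_le_add_right (Submodule.finrank_le _) 1

end Caratheodory

section ConvexViolation

variable {E Δ : Type*} [AddCommGroup E] [Module ℝ E] {f : E → Δ → ℝ}

theorem setOf_pos_subset_biUnion_of_mem_convexHull_s4 (hf : ∀ δ, ConvexOn ℝ Set.univ (f · δ))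
    {s : Set E} {y : E} (hy : y ∈ convexHull ℝ s) :
    {δ | 0 < f y δ} ⊆ ⋃ z ∈ s, {δ | 0 < f z δ} := by
  intro δ hyδ
  by_contra hδ
  simp only [Set.mem_iUnion, not_exists] at hδ
  have hconvex : Convex ℝ {x | f x δ ≤ 0} := by
    simpa using (hf δ).convex_le 0
  have hfy : f y δ ≤ 0 :=
    convexHull_min (fun z hz => show f z δ ≤ 0 from not_lt.1 (hδ z hz)) hconvex hy
  exact hfy.not_gt hyδ

theorem measureReal_setOf_pos_le_sum_of_mem_convexHull [MeasurableSpace Δ] (μ : Measure Δ)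
    [IsFiniteMeasure μ] (hf : ∀ δ, ConvexOn ℝ Set.univ (f · δ)) {t : Finset E} {y : E}
    (hy : y ∈ convexHull ℝ (t : Set E)) :
    μ.real {δ | 0 < f y δ} ≤ ∑ z ∈ t, μ.real {δ | 0 < f z δ} :=
  (measureReal_mono (setOf_pos_subset_biUnion_of_mem_convexHull_s4 hf hy) (measure_ne_top μ _)).trans
    (measureReal_biUnion_finset_le t _)

end ConvexViolation

theorem Finset.sum_le_of_le_div_of_card_le {α : Type*} {t : Finset α} (ht : t.Nonempty)
    {a : α → ℝ} {ε m : ℝ} (ha_nonneg : ∀ z ∈ t, 0 ≤ a z) (ha : ∀ z ∈ t, a z ≤ ε / m)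
    (hm : (#t : ℝ) ≤ m) : ∑ z ∈ t, a z ≤ ε := by
  obtain ⟨z₀, hz₀⟩ := ht
  have hdiv : 0 ≤ ε / m := (ha_nonneg z₀ hz₀).trans (ha z₀ hz₀)
  have hm_pos : 0 < m := lt_of_lt_of_le (by exact_mod_cast card_pos.2 ⟨z₀, hz₀⟩) hm
  calc ∑ z ∈ t, a z ≤ #t • (ε / m) := sum_le_card_nsmul t a _ ha
    _ ≤ m * (ε / m) := by rw [nsmul_eq_mul]; gcongr
    _ = ε := mul_div_cancel₀ ε hm_pos.ne'

theorem stmt4_general {n M : ℕ} {Δ : Type*} [MeasurableSpace Δ] (μ : Measure Δ)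
    [IsProbabilityMeasure μ]
    (g : EuclideanSpace ℝ (Fin n) → Δ → ℝ)
    (hconv : ∀ δ, ConvexOn ℝ Set.univ (fun x => g x δ))
    (x : Fin M → EuclideanSpace ℝ (Fin n)) (ε : ℝ)
    (h : ∀ k, (μ {δ | 0 < g (x k) δ}).toReal ≤ ε / min ((n : ℝ) + 1) (M : ℝ)) :
    ∀ y ∈ convexHull ℝ (Set.range x), (μ {δ | 0 < g y δ}).toReal ≤ ε := by
  intro y hy
  obtain ⟨t, htx, htn, hyt⟩ := exists_finset_card_le_finrank_succ_of_mem_convexHull hy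
  rw [finrank_euclideanSpace_fin] at htn
  have htM : #t ≤ M := by
    simpa using card_le_card_of_surjOn x (s := univ) fun z hz => by simpa using htx hz
  have hcard : (#t : ℝ) ≤ min ((n : ℝ) + 1) M := le_min (mod_cast htn) (mod_cast htM)
  have ht : t.Nonempty := coe_nonempty.1 (convexHull_nonempty_iff.1 ⟨y, hyt⟩)
  refine (measureReal_setOf_pos_le_sum_of_mem_convexHull μ hconv hyt).trans
    (sum_le_of_le_div_of_card_le ht (fun _ _ => measureReal_nonneg) (fun z hz => ?_) hcard)
  obtain ⟨k, rfl⟩ := htx hz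
  exact h k

theorem stmt4 {n M : ℕ} (hM : 0 < M) {Δ : Type*} [MeasurableSpace Δ] (μ : Measure Δ)
    [IsProbabilityMeasure μ]
    (g : EuclideanSpace ℝ (Fin n) → Δ → ℝ)
    (hconv : ∀ δ, ConvexOn ℝ Set.univ (fun x => g x δ))
    (hmeas : ∀ y, MeasurableSet {δ | 0 < g y δ})
    (x : Fin M → EuclideanSpace ℝ (Fin n)) (ε : ℝ) (hε : ε ∈ Set.Ioo (0:ℝ) 1)
    (h : ∀ k, (μ {δ | 0 < g (x k) δ}).toReal ≤ ε / min ((n : ℝ) + 1) (M : ℝ)) :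
    ∀ y ∈ convexHull ℝ (Set.range x), (μ {δ | 0 < g y δ}).toReal ≤ ε :=
  stmt4_general μ g hconv x ε h
end

section
/- For ε ∈ (0,1), β ∈ (0,1), ζ ≥ 1 an integer, and N a positive integer with N ≥ (e/(e−1))·(1/ε)·(ζ − 1 + ln(1/β)), it holds that Σ_{j=0}^{ζ−1} C(N,j) ε^j (1−ε)^{N−j} ≤ β. -/
/-!
Chernoff's method: for `t ≥ 1` every term of the tail `Φ(ε, ζ, N)` is at most `t ^ (ζ - 1)` times
the corresponding term of the binomial expansion of `(ε / t + (1 - ε)) ^ N`. Taking `t = e` and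
`1 - x ≤ exp (-x)` gives `Φ(ε, ζ, N) ≤ exp (ζ - 1 - N ε (1 - e⁻¹))`, and the hypothesis on `N`
says precisely that this exponent is at most `log β`.
-/

open Finset Real

theorem sum_range_choose_mul_pow_le_add_pow {p q : ℝ} (hp : 0 ≤ p) (hq : 0 ≤ q) (ζ N : ℕ) :
    ∑ j ∈ range ζ, (N.choose j : ℝ) * p ^ j * q ^ (N - j) ≤ (p + q) ^ N := by
  have h_vanish : ∀ j ≥ N + 1, (N.choose j : ℝ) * p ^ j * q ^ (N - j) = 0 := fun j hj => by
    rw [Nat.choose_eq_zero_of_lt hj, Nat.cast_zero, zero_mul, zero_mul]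
  calc ∑ j ∈ range ζ, (N.choose j : ℝ) * p ^ j * q ^ (N - j)
      ≤ ∑ j ∈ range (max ζ (N + 1)), (N.choose j : ℝ) * p ^ j * q ^ (N - j) :=
        sum_le_sum_of_subset_of_nonneg (range_subset_range.mpr (le_max_left _ _))
          fun _ _ _ => by positivity
    _ = ∑ j ∈ range (N + 1), (N.choose j : ℝ) * p ^ j * q ^ (N - j) :=
        eventually_constant_sum h_vanish (le_max_right _ _)
    _ = (p + q) ^ N := by
        rw [add_pow]
        exact sum_congr rfl fun _ _ => by ring

theorem sum_range_choose_mul_pow_le_pow_mul_div_add_pow {p q t : ℝ} (hp : 0 ≤ p) (hq : 0 ≤ q)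
    (ht : 1 ≤ t) (ζ N : ℕ) :
    ∑ j ∈ range ζ, (N.choose j : ℝ) * p ^ j * q ^ (N - j) ≤ t ^ (ζ - 1) * (p / t + q) ^ N := by
  have ht0 : 0 < t := zero_lt_one.trans_le ht
  calc ∑ j ∈ range ζ, (N.choose j : ℝ) * p ^ j * q ^ (N - j)
      ≤ ∑ j ∈ range ζ, t ^ (ζ - 1) * ((N.choose j : ℝ) * (p / t) ^ j * q ^ (N - j)) := by
        refine sum_le_sum fun j hjζ => ?_
        have hj : j ≤ ζ - 1 := Nat.le_sub_one_of_lt (mem_range.mp hjζ)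
        calc (N.choose j : ℝ) * p ^ j * q ^ (N - j)
            = t ^ j * ((N.choose j : ℝ) * (p / t) ^ j * q ^ (N - j)) := by
              have h_cancel : t ^ j * (p / t) ^ j = p ^ j := by
                rw [← mul_pow, mul_div_cancel₀ p ht0.ne']
              rw [← h_cancel]
              ring
          _ ≤ t ^ (ζ - 1) * ((N.choose j : ℝ) * (p / t) ^ j * q ^ (N - j)) := by
              gcongr
    _ = t ^ (ζ - 1) * ∑ j ∈ range ζ, (N.choose j : ℝ) * (p / t) ^ j * q ^ (N - j) :=
        (mul_sum _ _ _).symm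
    _ ≤ t ^ (ζ - 1) * (p / t + q) ^ N := by
        gcongr
        exact sum_range_choose_mul_pow_le_add_pow (by positivity) hq ζ N

theorem binomial_tail_le_exp {ε : ℝ} (hε0 : 0 ≤ ε) (hε1 : ε ≤ 1) {ζ : ℕ} (hζ : 1 ≤ ζ) (N : ℕ) :
    ∑ j ∈ range ζ, (N.choose j : ℝ) * ε ^ j * (1 - ε) ^ (N - j) ≤
      exp ((ζ : ℝ) - 1 - N * (ε * (1 - (exp 1)⁻¹))) := by
  set c := ε * (1 - (exp 1)⁻¹)
  have h_base : ε / exp 1 + (1 - ε) = 1 - c := by ring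
  have h_pow : exp 1 ^ (ζ - 1) = exp ((ζ : ℝ) - 1) := by
    rw [← exp_nat_mul, Nat.cast_sub hζ, Nat.cast_one, mul_one]
  calc ∑ j ∈ range ζ, (N.choose j : ℝ) * ε ^ j * (1 - ε) ^ (N - j)
      ≤ exp 1 ^ (ζ - 1) * (ε / exp 1 + (1 - ε)) ^ N :=
        sum_range_choose_mul_pow_le_pow_mul_div_add_pow hε0 (sub_nonneg.mpr hε1)
          (one_le_exp zero_le_one) ζ N
    _ ≤ exp 1 ^ (ζ - 1) * exp (-c) ^ N := by
        gcongr
        exact h_base ▸ one_sub_le_exp_neg c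
    _ = exp ((ζ : ℝ) - 1 - N * c) := by
        rw [h_pow, ← exp_nat_mul, ← exp_add]; ring_nf

theorem stmt5_general (ε β : ℝ) (hε : ε ∈ Set.Ioo (0:ℝ) 1) (hβ : β ∈ Set.Ioo (0:ℝ) 1)
    (ζ N : ℕ) (hζ : 1 ≤ ζ)
    (h : (N : ℝ) ≥ Real.exp 1 / (Real.exp 1 - 1) * (1 / ε) *
        ((ζ : ℝ) - 1 + Real.log (1 / β))) :
    ∑ j ∈ Finset.range ζ, (N.choose j : ℝ) * ε ^ j * (1 - ε) ^ (N - j) ≤ β := by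
  obtain ⟨hε0, hε1⟩ := hε
  have hc0 : 0 < ε * (1 - (exp 1)⁻¹) :=
    mul_pos hε0 (sub_pos.mpr (inv_lt_one_of_one_lt₀ (one_lt_exp_iff.mpr one_pos)))
  have h_exponent : (ζ : ℝ) - 1 - N * (ε * (1 - (exp 1)⁻¹)) ≤ log β := by
    have h_coeff : exp 1 / (exp 1 - 1) * (1 / ε) = (ε * (1 - (exp 1)⁻¹))⁻¹ := by
      have h_ne : exp 1 - 1 ≠ 0 := (sub_pos.mpr (one_lt_exp_iff.mpr one_pos)).ne'
      field_simp
    rw [h_coeff, ge_iff_le, inv_mul_le_iff₀ hc0, one_div, log_inv] at h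
    linarith
  calc ∑ j ∈ range ζ, (N.choose j : ℝ) * ε ^ j * (1 - ε) ^ (N - j)
      ≤ exp ((ζ : ℝ) - 1 - N * (ε * (1 - (exp 1)⁻¹))) := binomial_tail_le_exp hε0.le hε1.le hζ N
    _ ≤ β := (exp_le_exp.mpr h_exponent).trans_eq (exp_log hβ.1)

theorem stmt5 (ε β : ℝ) (hε : ε ∈ Set.Ioo (0:ℝ) 1) (hβ : β ∈ Set.Ioo (0:ℝ) 1)
    (ζ N : ℕ) (hζ : 1 ≤ ζ) (hN : 0 < N)
    (h : (N : ℝ) ≥ Real.exp 1 / (Real.exp 1 - 1) * (1 / ε) *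
        ((ζ : ℝ) - 1 + Real.log (1 / β))) :
    ∑ j ∈ Finset.range ζ, (N.choose j : ℝ) * ε ^ j * (1 - ε) ^ (N - j) ≤ β :=
  stmt5_general ε β hε hβ ζ N hζ h
end

section
/- Consider the optimization problem min_{(x,y,z)∈ℝ³} z subject to z ≥ −√(x²+y²) and z ≥ cos(θ_i) x + sin(θ_i) y − 1 for θ_i = (i−1)·2π/N, i = 1,…,N, with N ≥ 5. Then the optimal value equals z*_N = x*_N − 1 where x*_N = (√(1+τ_N²) − 1)/τ_N², τ_N := sin(2π/N)/(1+cos(2π/N)), attained at the point (x*_N, τ_N x*_N, z*_N). -/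
/-!
Put `a = π / N`. The planes have unit normals `uᵢ` at the angles `2πi/N`, and every direction in
the plane lies within angle `a` of one of them, so `maxᵢ ⟪uᵢ, v⟫ ≥ cos a · ‖v‖`. A feasible `z` thus
satisfies `z ≥ -‖v‖` and `z ≥ cos a · ‖v‖ - 1`, and adding `cos a` times the first inequality to the
second gives `(1 + cos a) z ≥ -1`. Equality holds at `v = (cos a, sin a) / (1 + cos a)`, on the
bisector of the first two normals, where the cone meets the two adjacent planes. By the half-angle
formula `τ_N = tan a`, and then `x*_N = cos a / (1 + cos a)`.
-/

open Real Finset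

lemma cos_le_cos_of_le_of_le_two_pi_sub {a t : ℝ} (ha : 0 ≤ a) (hat : a ≤ t)
    (hta : t ≤ 2 * π - a) : cos t ≤ cos a := by
  rcases le_total t π with ht | ht
  · exact cos_le_cos_of_nonneg_of_le_pi ha ht hat
  · rw [← cos_two_pi_sub t]
    exact cos_le_cos_of_nonneg_of_le_pi ha (by linarith) (by linarith)

lemma cos_mul_two_pi_div_sub_pi_div_le {N i : ℕ} (hi : i ≤ N) :
    cos (i * (2 * π / N) - π / N) ≤ cos (π / N) := by
  rcases Nat.eq_zero_or_pos i with rfl | hi0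
  · simp
  have hN : (0 : ℝ) < N := by exact_mod_cast hi0.trans_le hi
  have ha : 0 ≤ π / N := by positivity
  have hi0' : (1 : ℝ) ≤ i := by exact_mod_cast hi0
  have hi' : (i : ℝ) ≤ N := by exact_mod_cast hi
  rw [show i * (2 * π / N) - π / N = (2 * i - 1) * (π / N) by ring]
  apply cos_le_cos_of_le_of_le_two_pi_sub ha
  · nlinarith
  · rw [show 2 * π - π / N = (2 * N - 1) * (π / N) by field_simp]
    gcongr

lemma exists_cos_pi_div_le_cos_mul_two_pi_div_sub {N : ℕ} (hN : 0 < N) (φ : ℝ) :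
    ∃ i ∈ range N, cos (π / N) ≤ cos (i * (2 * π / N) - φ) := by
  have hθ : 0 < 2 * π / N := by positivity
  set k := round (φ / (2 * π / N))
  have hk : |k * (2 * π / N) - φ| ≤ π / N := by
    rw [abs_sub_comm, show φ - k * (2 * π / N) = (φ / (2 * π / N) - k) * (2 * π / N) by
      field_simp, abs_mul, abs_of_pos hθ]
    calc |φ / (2 * π / N) - k| * (2 * π / N) ≤ 1 / 2 * (2 * π / N) := by
          gcongr; exact abs_sub_round _
      _ = π / N := by ring
  have hmod : 0 ≤ k % N := Int.emod_nonneg k (by omega)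
  have hmodN : k % N < N := Int.emod_lt_of_pos k (by omega)
  refine ⟨(k % N).toNat, mem_range.2 (by omega), ?_⟩
  -- `k = k % N + N * (k / N)`, and `N` steps of `2π / N` make a full turn
  have hperiod : cos ((k % N).toNat * (2 * π / N) - φ) = cos (k * (2 * π / N) - φ) := by
    have hcast : (((k % N).toNat : ℕ) : ℝ) = ((k % N : ℤ) : ℝ) := by
      exact_mod_cast Int.toNat_of_nonneg hmod
    rw [hcast, ← cos_add_int_mul_two_pi _ (k / N)]
    congr 1
    rw [show (k : ℝ) = ((k % N : ℤ) : ℝ) + (N : ℝ) * ((k / N : ℤ) : ℝ) by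
      exact_mod_cast (Int.emod_add_mul_ediv k N).symm]
    field_simp
    ring
  rw [hperiod, ← cos_abs (k * (2 * π / N) - φ)]
  exact cos_le_cos_of_nonneg_of_le_pi (abs_nonneg _)
    (div_le_self pi_pos.le (Nat.one_le_cast.2 hN)) hk

lemma exists_eq_sqrt_mul_cos_and_eq_sqrt_mul_sin (x y : ℝ) :
    ∃ φ, x = √(x ^ 2 + y ^ 2) * cos φ ∧ y = √(x ^ 2 + y ^ 2) * sin φ := by
  refine ⟨Complex.arg (x + y * Complex.I), ?_, ?_⟩
  · rw [← Complex.norm_add_mul_I, Complex.norm_mul_cos_arg]; simp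
  · rw [← Complex.norm_add_mul_I, Complex.norm_mul_sin_arg]; simp

lemma exists_cos_pi_div_mul_sqrt_le {N : ℕ} (hN : 0 < N) (x y : ℝ) :
    ∃ i ∈ range N, cos (π / N) * √(x ^ 2 + y ^ 2) ≤
      cos (i * (2 * π / N)) * x + sin (i * (2 * π / N)) * y := by
  obtain ⟨φ, hx, hy⟩ := exists_eq_sqrt_mul_cos_and_eq_sqrt_mul_sin x y
  obtain ⟨i, hi, hcos⟩ := exists_cos_pi_div_le_cos_mul_two_pi_div_sub hN φ
  refine ⟨i, hi, ?_⟩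
  set r := √(x ^ 2 + y ^ 2)
  calc cos (π / N) * r ≤ cos (i * (2 * π / N) - φ) * r := by gcongr
    _ = cos (i * (2 * π / N)) * (r * cos φ) + sin (i * (2 * π / N)) * (r * sin φ) := by
        rw [cos_sub]; ring
    _ = cos (i * (2 * π / N)) * x + sin (i * (2 * π / N)) * y := by rw [← hx, ← hy]

lemma cos_pi_div_nonneg {N : ℕ} (hN : 2 ≤ N) : 0 ≤ cos (π / N) :=
  cos_nonneg_of_mem_Icc ⟨by linarith [show 0 ≤ π / N by positivity, pi_pos],
    div_le_div_of_nonneg_left pi_pos.le two_pos (by exact_mod_cast hN)⟩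

lemma neg_one_div_one_add_cos_pi_div_le {N : ℕ} (hN : 2 ≤ N) {x y z : ℝ}
    (hcone : -√(x ^ 2 + y ^ 2) ≤ z)
    (hplanes : ∀ i ∈ range N, cos (i * (2 * π / N)) * x + sin (i * (2 * π / N)) * y - 1 ≤ z) :
    -1 / (1 + cos (π / N)) ≤ z := by
  have hc := cos_pi_div_nonneg hN
  obtain ⟨i, hi, hsupp⟩ := exists_cos_pi_div_mul_sqrt_le (N := N) (by omega) x y
  have hplane := hplanes i hi
  have hcone' := mul_le_mul_of_nonneg_left hcone hc
  rw [div_le_iff₀ (by positivity)]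
  linarith

lemma sqrt_sq_add_sq_div_one_add_cos {a : ℝ} (h : 0 < 1 + cos a) :
    √((cos a / (1 + cos a)) ^ 2 + (sin a / (1 + cos a)) ^ 2) = 1 / (1 + cos a) := by
  have hsq : (cos a / (1 + cos a)) ^ 2 + (sin a / (1 + cos a)) ^ 2 = (1 / (1 + cos a)) ^ 2 := by
    field_simp
    linear_combination cos_sq_add_sin_sq a
  rw [hsq, sqrt_sq (by positivity)]

lemma plane_at_bisector_le_neg_one_div {N : ℕ} (hN : 2 ≤ N) {i : ℕ} (hi : i ∈ range N) :
    cos (i * (2 * π / N)) * (cos (π / N) / (1 + cos (π / N))) +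
      sin (i * (2 * π / N)) * (sin (π / N) / (1 + cos (π / N))) - 1 ≤
        -1 / (1 + cos (π / N)) := by
  have hc : 0 < 1 + cos (π / N) := by linarith [cos_pi_div_nonneg hN]
  have hle := cos_mul_two_pi_div_sub_pi_div_le (N := N) (i := i) (mem_range.1 hi).le
  calc cos (i * (2 * π / N)) * (cos (π / N) / (1 + cos (π / N))) +
        sin (i * (2 * π / N)) * (sin (π / N) / (1 + cos (π / N))) - 1
      = cos (i * (2 * π / N) - π / N) / (1 + cos (π / N)) - 1 := by rw [cos_sub]; ring
    _ ≤ cos (π / N) / (1 + cos (π / N)) - 1 := by gcongr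
    _ = -1 / (1 + cos (π / N)) := by field_simp; ring

lemma sin_two_mul_div_one_add_cos_two_mul {a : ℝ} (h : cos a ≠ 0) :
    sin (2 * a) / (1 + cos (2 * a)) = tan a := by
  rw [sin_two_mul, cos_two_mul, tan_eq_sin_div_cos]
  field_simp
  ring

lemma sqrt_one_add_tan_sq_sub_one_div_tan_sq {a : ℝ} (hc : 0 < cos a) (hs : sin a ≠ 0) :
    (√(1 + tan a ^ 2) - 1) / tan a ^ 2 = cos a / (1 + cos a) := by
  have hsqrt : √(1 + tan a ^ 2) = 1 / cos a := by
    rw [← inv_sqrt_one_add_tan_sq hc, one_div, inv_inv]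
  have hs2 : 1 - cos a ^ 2 ≠ 0 := by rw [← sin_sq]; positivity
  rw [hsqrt, tan_eq_sin_div_cos, div_pow, sin_sq]
  field_simp
  ring

theorem stmt11 (N : ℕ) (hN : 5 ≤ N) (τ xs zs : ℝ)
    (hτ : τ = Real.sin (2 * Real.pi / N) / (1 + Real.cos (2 * Real.pi / N)))
    (hxs : xs = (Real.sqrt (1 + τ ^ 2) - 1) / τ ^ 2)
    (hzs : zs = xs - 1) :
    IsLeast {z : ℝ | ∃ x y : ℝ,
        -Real.sqrt (x ^ 2 + y ^ 2) ≤ z ∧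
        ∀ i ∈ Finset.range N,
          Real.cos ((i : ℝ) * (2 * Real.pi / N)) * x +
            Real.sin ((i : ℝ) * (2 * Real.pi / N)) * y - 1 ≤ z} zs ∧
    (-Real.sqrt (xs ^ 2 + (τ * xs) ^ 2) ≤ zs ∧
      ∀ i ∈ Finset.range N,
        Real.cos ((i : ℝ) * (2 * Real.pi / N)) * xs +
          Real.sin ((i : ℝ) * (2 * Real.pi / N)) * (τ * xs) - 1 ≤ zs) := by
  have ha : 0 < π / N := by positivity
  have ha' : π / N < π / 2 :=
    div_lt_div_of_pos_left pi_pos two_pos (by exact_mod_cast (by omega : 2 < N))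
  have hc : 0 < cos (π / N) := cos_pos_of_mem_Ioo ⟨by linarith, ha'⟩
  have hs : sin (π / N) ≠ 0 := (sin_pos_of_pos_of_lt_pi ha (by linarith)).ne'
  have hτ' : τ = tan (π / N) := by
    rw [hτ, show 2 * π / N = 2 * (π / N) by ring, sin_two_mul_div_one_add_cos_two_mul hc.ne']
  have hxs' : xs = cos (π / N) / (1 + cos (π / N)) := by
    rw [hxs, hτ', sqrt_one_add_tan_sq_sub_one_div_tan_sq hc hs]
  have hys : τ * xs = sin (π / N) / (1 + cos (π / N)) := by
    rw [hτ', hxs', tan_eq_sin_div_cos]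
    field_simp
  have hzs' : zs = -1 / (1 + cos (π / N)) := by
    rw [hzs, hxs']
    field_simp
    ring
  have hcone : -√(xs ^ 2 + (τ * xs) ^ 2) ≤ zs := by
    rw [hys, hxs', sqrt_sq_add_sq_div_one_add_cos (by linarith), hzs', neg_div]
  have hplanes : ∀ i ∈ range N,
      cos (i * (2 * π / N)) * xs + sin (i * (2 * π / N)) * (τ * xs) - 1 ≤ zs := by
    intro i hi
    rw [hys, hxs', hzs']
    exact plane_at_bisector_le_neg_one_div (by omega) hi
  refine ⟨⟨⟨xs, τ * xs, hcone, hplanes⟩, ?_⟩, hcone, hplanes⟩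
  rintro z ⟨x, y, hz_cone, hz_planes⟩
  rw [hzs']
  exact neg_one_div_one_add_cos_pi_div_le (by omega) hz_cone hz_planes
end

section
/- The map θ ↦ x*(θ) := (√(1+τ(θ)²) − 1)/τ(θ)² with τ(θ) := sin(θ)/(1+cos(θ)) = tan(θ/2) is strictly decreasing on (0, π/2). -/
/-!
Rationalising, `(√(1 + t²) - 1) / t² = 1 / (√(1 + t²) + 1)`, which is strictly decreasing for
`t > 0`; and `τ θ = tan (θ / 2)` is positive and strictly increasing on `(0, π)`.
-/

open Real Set

lemma sqrt_one_add_sq_sub_one_div_sq {t : ℝ} (ht : t ≠ 0) :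
    (√(1 + t ^ 2) - 1) / t ^ 2 = (√(1 + t ^ 2) + 1)⁻¹ := by
  have hsq : √(1 + t ^ 2) ^ 2 = 1 + t ^ 2 := sq_sqrt (by positivity)
  have hpos : 0 < √(1 + t ^ 2) + 1 := by positivity
  field_simp
  linear_combination hsq

lemma strictAntiOn_sqrt_one_add_sq_sub_one_div_sq :
    StrictAntiOn (fun t : ℝ => (√(1 + t ^ 2) - 1) / t ^ 2) (Ioi 0) := by
  intro a (ha : 0 < a) b (hb : 0 < b) hab
  simp only [sqrt_one_add_sq_sub_one_div_sq ha.ne', sqrt_one_add_sq_sub_one_div_sq hb.ne']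
  have hsqrt : √(1 + a ^ 2) < √(1 + b ^ 2) :=
    sqrt_lt_sqrt (by positivity) (by gcongr)
  exact inv_strictAnti₀ (by positivity) (by linarith)

lemma sin_div_one_add_cos_eq_tan_half {θ : ℝ} (h : cos (θ / 2) ≠ 0) :
    sin θ / (1 + cos θ) = tan (θ / 2) := by
  have hθ : θ = 2 * (θ / 2) := by ring
  rw [tan_eq_sin_div_cos, hθ, sin_two_mul, cos_two_mul, ← hθ]
  field_simp
  ring

lemma strictMonoOn_sin_div_one_add_cos :
    StrictMonoOn (fun θ : ℝ => sin θ / (1 + cos θ)) (Ioo (-π) π) := by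
  have hhalf : MapsTo (· / 2) (Ioo (-π) π) (Ioo (-(π / 2)) (π / 2)) :=
    fun θ ⟨h₁, h₂⟩ => ⟨by linarith, by linarith⟩
  have htan : StrictMonoOn (fun θ : ℝ => tan (θ / 2)) (Ioo (-π) π) :=
    strictMonoOn_tan.comp (fun _ _ _ _ h => by linarith) hhalf
  refine htan.congr fun θ hθ => (sin_div_one_add_cos_eq_tan_half ?_).symm
  exact (cos_pos_of_mem_Ioo (hhalf hθ)).ne'

lemma sin_div_one_add_cos_pos {θ : ℝ} (h₀ : 0 < θ) (hπ : θ < π) : 0 < sin θ / (1 + cos θ) := by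
  rw [sin_div_one_add_cos_eq_tan_half (cos_pos_of_mem_Ioo ⟨by linarith, by linarith⟩).ne']
  exact tan_pos_of_pos_of_lt_pi_div_two (by linarith) (by linarith)

theorem stmt13 :
    StrictAntiOn
      (fun θ : ℝ =>
        (Real.sqrt (1 + (Real.sin θ / (1 + Real.cos θ)) ^ 2) - 1) /
          (Real.sin θ / (1 + Real.cos θ)) ^ 2)
      (Set.Ioo 0 (Real.pi / 2)) := by
  have hsub : Ioo 0 (π / 2) ⊆ Ioo (-π) π :=
    Ioo_subset_Ioo (by linarith [pi_pos]) (by linarith [pi_pos])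
  refine strictAntiOn_sqrt_one_add_sq_sub_one_div_sq.comp_strictMonoOn
    (strictMonoOn_sin_div_one_add_cos.mono hsub) fun θ hθ => ?_
  exact sin_div_one_add_cos_pos hθ.1 (by linarith [hθ.2, pi_pos])
end

section
/- For ε, β ∈ (0,1), integers ζ ≥ 1, M ≥ 1, n ≥ 1, if N ≥ (e/(e−1))·(min{n+1,M}/ε)·(ζ − 1 + ln(M/β)), then M · Φ(ε/min{n+1,M}, ζ, N) ≤ β, where Φ(η,ζ,N) = Σ_{j=0}^{ζ−1} C(N,j) η^j (1−η)^{N−j}. -/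
/-!
Exponential tilting: multiplying the `j`-th term of `Φ(η, ζ, N)` by `e^(ζ-1-j) ≥ 1` and completing
the sum over `j ≤ N` gives `Φ ≤ e^(ζ-1) (η/e + 1 - η)^N ≤ exp (ζ - 1 - (1 - 1/e) η N)`, and the
hypothesis on `N` (with `η = ε / min{n+1, M}`) makes the right-hand side at most `β / M`.
-/

open Finset Real

/-- `Φ(η, ζ, N)`: the probability that a binomial `(N, η)` variable is smaller than `ζ`. -/
def binomialLowerTail (η : ℝ) (ζ N : ℕ) : ℝ :=
  ∑ j ∈ range ζ, (N.choose j : ℝ) * η ^ j * (1 - η) ^ (N - j)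

theorem binomialLowerTail_succ_le_pow_mul {η x : ℝ} (hη0 : 0 ≤ η) (hη1 : η ≤ 1) (hx : 1 ≤ x)
    (k N : ℕ) :
    binomialLowerTail η (k + 1) N ≤ x ^ k * (1 - η * (1 - x⁻¹)) ^ N := by
  set g : ℕ → ℝ := fun j => (N.choose j : ℝ) * (η / x) ^ j * (1 - η) ^ (N - j)
  have hx0 : 0 < x := by linarith
  have hg_nonneg : ∀ j, 0 ≤ g j := fun j => by
    have : 0 ≤ 1 - η := by linarith
    positivity
  have hterm : ∀ j ∈ range (k + 1),
      (N.choose j : ℝ) * η ^ j * (1 - η) ^ (N - j) ≤ x ^ k * g j := fun j hj => by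
    have hxj : x ^ j ≤ x ^ k := pow_le_pow_right₀ hx (Nat.lt_succ_iff.mp (mem_range.mp hj))
    calc (N.choose j : ℝ) * η ^ j * (1 - η) ^ (N - j) = x ^ j * g j := by
          simp only [g, div_pow]; field_simp
      _ ≤ x ^ k * g j := mul_le_mul_of_nonneg_right hxj (hg_nonneg j)
  have hsupp : ∀ j ∈ range (k + 1), g j ≠ 0 → j ∈ range (N + 1) := fun j _ hj => by
    by_contra hjN
    exact hj (by simp [g, Nat.choose_eq_zero_of_lt (by simpa using hjN : N < j)])
  calc binomialLowerTail η (k + 1) N ≤ ∑ j ∈ range (k + 1), x ^ k * g j := sum_le_sum hterm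
    _ = x ^ k * ∑ j ∈ range (k + 1) with j ∈ range (N + 1), g j := by
        rw [← mul_sum, sum_filter_of_ne hsupp]
    _ ≤ x ^ k * ∑ j ∈ range (N + 1), g j := by
        gcongr
        exact fun j hj => (mem_filter.mp hj).2
    _ = x ^ k * (1 - η * (1 - x⁻¹)) ^ N := by
        rw [show 1 - η * (1 - x⁻¹) = η / x + (1 - η) by field_simp; ring, add_pow]
        exact congrArg _ (sum_congr rfl fun j _ => by ring)

theorem binomialLowerTail_le_exp {η : ℝ} (hη0 : 0 ≤ η) (hη1 : η ≤ 1) (ζ N : ℕ) :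
    binomialLowerTail η ζ N ≤ exp ((ζ : ℝ) - 1 - (1 - exp (-1)) * η * N) := by
  cases ζ with
  | zero => simpa [binomialLowerTail] using (exp_pos _).le
  | succ k =>
    have hc0 : 0 ≤ 1 - exp (-1) := by linarith [exp_le_one_iff.mpr (by norm_num : (-1 : ℝ) ≤ 0)]
    have hc1 : 1 - exp (-1) ≤ 1 := by linarith [exp_pos (-1)]
    calc binomialLowerTail η (k + 1) N
        ≤ exp 1 ^ k * (1 - η * (1 - (exp 1)⁻¹)) ^ N :=
          binomialLowerTail_succ_le_pow_mul hη0 hη1 (one_le_exp zero_le_one) k N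
      _ ≤ exp 1 ^ k * exp (-(η * (1 - exp (-1)))) ^ N := by
          rw [← exp_neg]
          gcongr
          · nlinarith
          · linarith [add_one_le_exp (-(η * (1 - exp (-1))))]
      _ = exp ((↑(k + 1) : ℝ) - 1 - (1 - exp (-1)) * η * N) := by
          rw [← exp_nat_mul, ← exp_nat_mul, ← exp_add]; push_cast; ring_nf

theorem binomialLowerTail_le_of_le {η β : ℝ} (hη0 : 0 < η) (hη1 : η ≤ 1) (hβ : 0 < β) {ζ N : ℕ}
    (hN : (N : ℝ) ≥ exp 1 / (exp 1 - 1) * (1 / η) * ((ζ : ℝ) - 1 + log (1 / β))) :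
    binomialLowerTail η ζ N ≤ β := by
  have hc0 : 0 < 1 - exp (-1) := by linarith [exp_lt_one_iff.mpr (by norm_num : (-1 : ℝ) < 0)]
  have hexponent : (ζ : ℝ) - 1 - (1 - exp (-1)) * η * N ≤ log β := by
    have hscale : (1 - exp (-1)) * η * (exp 1 / (exp 1 - 1) * (1 / η)) = 1 := by
      have : exp 1 - 1 ≠ 0 := by linarith [add_one_le_exp 1]
      rw [exp_neg]; field_simp
    have := mul_le_mul_of_nonneg_left hN (mul_pos hc0 hη0).le
    rw [← mul_assoc, hscale, one_mul, one_div, log_inv] at this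
    linarith
  calc binomialLowerTail η ζ N ≤ exp ((ζ : ℝ) - 1 - (1 - exp (-1)) * η * N) :=
        binomialLowerTail_le_exp hη0.le hη1 ζ N
    _ ≤ β := (exp_le_exp.mpr hexponent).trans_eq (exp_log hβ)


theorem stmt14_general (ε β : ℝ) (hε : ε ∈ Set.Ioo (0:ℝ) 1) (hβ : β ∈ Set.Ioo (0:ℝ) 1)
    (ζ M n N : ℕ) (hM : 1 ≤ M)
    (h : (N : ℝ) ≥ Real.exp 1 / (Real.exp 1 - 1) *
        (min ((n : ℝ) + 1) (M : ℝ) / ε) * ((ζ : ℝ) - 1 + Real.log ((M : ℝ) / β))) :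
    (M : ℝ) * ∑ j ∈ Finset.range ζ,
        (N.choose j : ℝ) * (ε / min ((n : ℝ) + 1) (M : ℝ)) ^ j *
          (1 - ε / min ((n : ℝ) + 1) (M : ℝ)) ^ (N - j) ≤ β := by
  set t := min ((n : ℝ) + 1) (M : ℝ)
  have hM0 : (0 : ℝ) < M := by exact_mod_cast hM
  have ht : 1 ≤ t := le_min (by linarith [n.cast_nonneg (α := ℝ)]) (by exact_mod_cast hM)
  have hη1 : ε / t ≤ 1 := (div_le_one (by linarith)).mpr (by linarith [hε.2])
  have hΦ : binomialLowerTail (ε / t) ζ N ≤ β / M := by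
    refine binomialLowerTail_le_of_le (div_pos hε.1 (by linarith)) hη1 (div_pos hβ.1 hM0) ?_
    rwa [one_div_div, one_div_div]
  calc (M : ℝ) * binomialLowerTail (ε / t) ζ N ≤ M * (β / M) := by gcongr
    _ = β := mul_div_cancel₀ β hM0.ne'

theorem stmt14 (ε β : ℝ) (hε : ε ∈ Set.Ioo (0:ℝ) 1) (hβ : β ∈ Set.Ioo (0:ℝ) 1)
    (ζ M n N : ℕ) (hζ : 1 ≤ ζ) (hM : 1 ≤ M) (hn : 1 ≤ n)
    (h : (N : ℝ) ≥ Real.exp 1 / (Real.exp 1 - 1) *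
        (min ((n : ℝ) + 1) (M : ℝ) / ε) * ((ζ : ℝ) - 1 + Real.log ((M : ℝ) / β))) :
    (M : ℝ) * ∑ j ∈ Finset.range ζ,
        (N.choose j : ℝ) * (ε / min ((n : ℝ) + 1) (M : ℝ)) ^ j *
          (1 - ε / min ((n : ℝ) + 1) (M : ℝ)) ^ (N - j) ≤ β :=
  stmt14_general ε β hε hβ ζ M n N hM h
end
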